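/- Let k be a field of characteristic p, P a finite p-group, and M, M' permutation kP-modules. Then the Brauer construction at P of Hom_k(M, M') satisfies (Hom_k(M, M'))(ΔP) ≅ Hom_k(M(P), M'(P)) naturally; in particular (End_k(M))(P) ≅ End_k(M(P)) as k-algebras. -/

import Mathlib

open Representation

namespace PaperGrp

variable {O : Type*} [CommRing O] {G : Type*} [Group G]
variable {M M₂ : Type*} [AddCommGroup M] [Module O M] [AddCommGroup M₂] [Module O M₂]

/-- The submodule of fixed points of a subgroup `P` under a representation. -/
def fixedSub (ρ : Representation O G M) (P : Subgroup G) : Submodule O M where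
  carrier := {m | ∀ g ∈ P, ρ g m = m}
  add_mem' := fun ha hb g hg => by rw [map_add, ha g hg, hb g hg]
  zero_mem' := fun g hg => map_zero _
  smul_mem' := fun c m hm g hg => by rw [map_smul, hm g hg]

/-- The relative trace `Tr_Q^P(m) = ∑_{x ∈ P/Q} x • m` of a `Q`-fixed element. -/
noncomputable def relTrace (ρ : Representation O G M) (P Q : Subgroup G) (m : M)
    (hm : ∀ g ∈ Q, ρ g m = m) : M :=
  ∑ᶠ x : P ⧸ Q.subgroupOf P, Quotient.liftOn' x (fun g => ρ (g : G) m) (by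
    intro a b hab
    rw [QuotientGroup.leftRel_apply] at hab
    have h : ((a⁻¹ * b : ↥P) : G) ∈ Q := Subgroup.mem_subgroupOf.mp hab
    have hb : (b : G) = (a : G) * ((a⁻¹ * b : ↥P) : G) := by push_cast; group
    show ρ (a : G) m = ρ (b : G) m
    rw [hb, map_mul, Module.End.mul_apply, hm _ h])

/-- The submodule generated by relative traces from proper subgroups of `P`. -/
noncomputable def traceKer (ρ : Representation O G M) (P : Subgroup G) : Submodule O M :=
  Submodule.span O {x | ∃ Q : Subgroup G, Q < P ∧
    ∃ (m : M) (hm : ∀ g ∈ Q, ρ g m = m), x = relTrace ρ P Q m hm}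

/-- The kernel of the Brauer construction: relative traces together with `p·M^P`. -/
noncomputable def brauerKer (ρ : Representation O G M) (p : ℕ) (P : Subgroup G) :
    Submodule O (fixedSub ρ P) :=
  Submodule.comap (fixedSub ρ P).subtype (traceKer ρ P) ⊔ (Ideal.span {(p : O)}) • ⊤

/-- The Brauer construction `M(P) = M^P / (∑_{Q < P} Tr_Q^P M^Q + p M^P)`. -/
noncomputable abbrev BrauerQuot (ρ : Representation O G M) (p : ℕ) (P : Subgroup G) :=
  (fixedSub ρ P) ⧸ brauerKer ρ p P

variable [Finite G]

theorem map_relTrace (ρ : Representation O G M) (ρ₂ : Representation O G M₂)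
    (α : M →ₗ[O] M₂) (hα : ∀ (g : G) (m : M), α (ρ g m) = ρ₂ g (α m))
    (P Q : Subgroup G) (m : M) (hm : ∀ g ∈ Q, ρ g m = m) :
    α (relTrace ρ P Q m hm) = relTrace ρ₂ P Q (α m)
      (fun g hg => by rw [← hα, hm g hg]) := by
  unfold relTrace
  refine Eq.trans (α.toAddMonoidHom.map_finsum (Set.toFinite _)) ?_
  refine finsum_congr fun x => ?_
  induction x using Quotient.inductionOn' with
  | h g =>
      show α _ = _
      rw [Quotient.liftOn'_mk'', Quotient.liftOn'_mk'', hα]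

/-- The map induced by an equivariant map on Brauer constructions. -/
noncomputable def brauerMap (ρ : Representation O G M) (ρ₂ : Representation O G M₂)
    (α : M →ₗ[O] M₂) (hα : ∀ (g : G) (m : M), α (ρ g m) = ρ₂ g (α m))
    (p : ℕ) (P : Subgroup G) :
    BrauerQuot ρ p P →ₗ[O] BrauerQuot ρ₂ p P :=
  Submodule.mapQ _ _
    (α.restrict (p := fixedSub ρ P) (q := fixedSub ρ₂ P)
      (fun m hm g hg => by rw [← hα, hm g hg]))
    (by
      have htr : traceKer ρ P ≤ (traceKer ρ₂ P).comap α := by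
        refine Submodule.span_le.mpr ?_
        rintro x ⟨Q, hQ, m, hm, rfl⟩
        refine Submodule.subset_span ?_
        exact ⟨Q, hQ, α m, fun g hg => by rw [← hα, hm g hg],
          map_relTrace ρ ρ₂ α hα P Q m hm⟩
      refine sup_le ?_ ?_
      · intro x hx
        refine Submodule.mem_sup_left ?_
        exact htr hx
      · intro x hx
        refine Submodule.mem_sup_right ?_
        refine Submodule.smul_induction_on hx ?_ ?_
        · intro r hr n _
          simpa only [map_smul] using
            Submodule.smul_mem_smul hr (Submodule.mem_top)
        · intro x y hx hy
          simpa only [map_add] using Submodule.add_mem _ hx hy)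

/-- Equivariant idempotent summands realize a subrepresentation. -/
def subRep (ρ : Representation O G M) (S : Submodule O M)
    (hS : ∀ g : G, ∀ x ∈ S, ρ g x ∈ S) : Representation O G ↥S where
  toFun g := (ρ g).restrict (hS g)
  map_one' := by ext x; simp [LinearMap.restrict_apply]
  map_mul' g h := by ext x; simp [LinearMap.restrict_apply]

/-- A representation is indecomposable if it is nonzero and has no nontrivial
equivariant idempotent endomorphism. -/
def IsIndecomposableRep (ρ : Representation O G M) : Prop :=
  Nontrivial M ∧ ∀ f : M →ₗ[O] M, (∀ (g : G) (m : M), f (ρ g m) = ρ g (f m)) →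
    f ∘ₗ f = f → f = 0 ∨ f = LinearMap.id

/-- The relative trace of an endomorphism, `Tr_Q^G(f) = ∑_{x ∈ G/Q} x f x⁻¹`. -/
noncomputable def relTraceEnd (ρ : Representation O G M) (Q : Subgroup G)
    (f : M →ₗ[O] M) (hf : ∀ g ∈ Q, ∀ m, f (ρ g m) = ρ g (f m)) : M →ₗ[O] M :=
  ∑ᶠ x : G ⧸ Q, Quotient.liftOn' x (fun g => ρ g ∘ₗ f ∘ₗ ρ g⁻¹) (by
    intro a b hab
    rw [QuotientGroup.leftRel_apply] at hab
    ext m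
    show ρ a (f (ρ a⁻¹ m)) = ρ b (f (ρ b⁻¹ m))
    refine Eq.symm ?_
    have hb : b = a * (a⁻¹ * b) := by group
    have h1 : ρ b⁻¹ m = ρ (a⁻¹ * b)⁻¹ (ρ a⁻¹ m) := by
      conv_lhs => rw [hb]
      rw [mul_inv_rev, map_mul, Module.End.mul_apply]
    calc ρ b (f (ρ b⁻¹ m))
        = ρ b (ρ (a⁻¹ * b)⁻¹ (f (ρ a⁻¹ m))) := by
          rw [h1, hf _ (inv_mem hab) (ρ a⁻¹ m)]
      _ = ρ a (f (ρ a⁻¹ m)) := by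
          rw [← Module.End.mul_apply, ← map_mul]
          have hba : b * (a⁻¹ * b)⁻¹ = a := by group
          rw [hba]
    )

/-- Higman's criterion as a definition of relative projectivity. -/
noncomputable def RelProjective (ρ : Representation O G M) (Q : Subgroup G) : Prop :=
  ∃ (f : M →ₗ[O] M) (hf : ∀ g ∈ Q, ∀ m, f (ρ g m) = ρ g (f m)),
    relTraceEnd ρ Q f hf = LinearMap.id

/-- `P` is a vertex of the representation. -/
noncomputable def HasVertex (ρ : Representation O G M) (P : Subgroup G) : Prop :=
  RelProjective ρ P ∧ ∀ Q : Subgroup G, RelProjective ρ Q → ¬ Q < P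

/-- The permutation representation of `G` on a `G`-set `X`. -/
def permRep (O : Type*) [CommRing O] {G : Type*} [Group G] (X : Type*) [MulAction G X] :
    Representation O G (X → O) where
  toFun g :=
    { toFun := fun f x => f (g⁻¹ • x)
      map_add' := fun f₁ f₂ => rfl
      map_smul' := fun c f => rfl }
  map_one' := by ext f x; simp
  map_mul' g h := by
    ext f x
    simp [Module.End.mul_apply, mul_smul]

/-- A representation is a permutation representation if it admits an invariant basis. -/
def IsPermRep {O : Type*} [CommRing O] {G : Type*} [Monoid G]
    {M : Type*} [AddCommMonoid M] [Module O M] (ρ : Representation O G M) : Prop :=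
  ∃ (ι : Type) (b : Module.Basis ι O M), ∀ (g : G) (i : ι), ∃ j, ρ g (b i) = b j

/-- A `p`-permutation representation: a direct summand of a permutation representation. -/
def IsPPermRep (ρ : Representation O G M) : Prop :=
  ∃ (W : Type) (_ : AddCommGroup W) (_ : Module O W) (ρW : Representation O G W),
    IsPermRep ρW ∧
    ∃ (i : M →ₗ[O] W) (pr : W →ₗ[O] M),
      (∀ (g : G) (m : M), i (ρ g m) = ρW g (i m)) ∧
      (∀ (g : G) (w : W), pr (ρW g w) = ρ g (pr w)) ∧
      pr ∘ₗ i = LinearMap.id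

end PaperGrp

namespace BrauerAux
open PaperGrp Representation

variable {k : Type*} [Field k] {G : Type*} [Group G]
variable {M : Type*} [AddCommGroup M] [Module k M]
variable {M' : Type*} [AddCommGroup M'] [Module k M']

lemma equivariant_of_fixed {ρ : Representation k G M} {ρ' : Representation k G M'}
    {f : M →ₗ[k] M'} (h : ∀ g ∈ (⊤ : Subgroup G), (ρ.linHom ρ') g f = f) :
    ∀ (g : G) (m : M), f (ρ g m) = ρ' g (f m) := by
  intro g m
  have h1 : (ρ.linHom ρ') g f = f := h g trivial
  have h2 := congrArg (fun u : M →ₗ[k] M' => u (ρ g m)) h1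
  rw [← h2]
  show ρ' g (f (ρ g⁻¹ (ρ g m))) = ρ' g (f m)
  rw [← Module.End.mul_apply, ← map_mul, inv_mul_cancel, map_one, Module.End.one_apply]

lemma fixed_apply_fixed {ρ : Representation k G M} {ρ' : Representation k G M'}
    {f : M →ₗ[k] M'} (h : ∀ g ∈ (⊤ : Subgroup G), (ρ.linHom ρ') g f = f)
    {m : M} (hm : ∀ g : G, ρ g m = m) : ∀ g : G, ρ' g (f m) = f m := by
  intro g
  rw [← equivariant_of_fixed h g m, hm g]

variable [Finite G]

/-- The relative trace of a globally invariant element from a proper subgroup of a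
`p`-group vanishes in characteristic `p`. -/
lemma relTrace_of_invariant (ρ : Representation k G M) {p : ℕ} [Fact p.Prime] [CharP k p]
    (hP : IsPGroup p G) {Q : Subgroup G} (hQ : Q < ⊤) (m : M)
    (hm : ∀ g ∈ Q, ρ g m = m) (hm0 : ∀ g : G, ρ g m = m) :
    relTrace ρ ⊤ Q m hm = 0 := by
  letI : Fintype ((⊤ : Subgroup G) ⧸ Q.subgroupOf ⊤) := Fintype.ofFinite _
  unfold relTrace
  rw [finsum_eq_sum_of_fintype]
  have hconst : ∀ x : (⊤ : Subgroup G) ⧸ Q.subgroupOf ⊤,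
      (Quotient.liftOn' x (fun g : (⊤ : Subgroup G) => ρ (g : G) m) (by
        intro a b hab
        rw [QuotientGroup.leftRel_apply] at hab
        have h : ((a⁻¹ * b : ↥(⊤ : Subgroup G)) : G) ∈ Q := Subgroup.mem_subgroupOf.mp hab
        have hb : (b : G) = (a : G) * ((a⁻¹ * b : ↥(⊤ : Subgroup G)) : G) := by push_cast; group
        show ρ (a : G) m = ρ (b : G) m
        rw [hb, map_mul, Module.End.mul_apply, hm _ h])) = m := by
    intro x
    induction x using Quotient.inductionOn' with
    | h g => rw [Quotient.liftOn'_mk'']; exact hm0 g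
  rw [Finset.sum_congr rfl fun x _ => hconst x, Finset.sum_const, Finset.card_univ]
  have hcard : Fintype.card ((⊤ : Subgroup G) ⧸ Q.subgroupOf ⊤) = (Q.subgroupOf ⊤).index := by
    rw [Subgroup.index_eq_card, Nat.card_eq_fintype_card]
  obtain ⟨n, hn⟩ := (hP.to_subgroup ⊤).index (Q.subgroupOf (⊤ : Subgroup G))
  have hn0 : n ≠ 0 := by
    rintro rfl
    rw [pow_zero, Subgroup.index_eq_one, Subgroup.subgroupOf_eq_top] at hn
    exact absurd (le_antisymm hQ.le hn) hQ.ne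
  rw [hcard, hn, ← Nat.cast_smul_eq_nsmul k]
  have : ((p ^ n : ℕ) : k) = 0 := by
    obtain ⟨n', rfl⟩ := Nat.exists_eq_succ_of_ne_zero hn0
    push_cast
    rw [pow_succ, CharP.cast_eq_zero k p, mul_zero]
  rw [this, zero_smul]

/-- Evaluating an element of the trace kernel of `Hom(M,M')` at a fixed vector of `M`
lands in the trace kernel of `M'`. -/
lemma traceKer_apply_mem (ρ : Representation k G M) (ρ' : Representation k G M')
    {m : M} (hm : ∀ g : G, ρ g m = m) :
    ∀ f ∈ traceKer (ρ.linHom ρ') ⊤, f m ∈ traceKer ρ' ⊤ := by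
  have hle : traceKer (ρ.linHom ρ') ⊤ ≤
      Submodule.comap (LinearMap.applyₗ (R := k) m) (traceKer ρ' ⊤) := by
    refine Submodule.span_le.mpr ?_
    rintro x ⟨Q, hQ, f₀, hf₀, rfl⟩
    have hα : ∀ (g : G) (u : M →ₗ[k] M'),
        (LinearMap.applyₗ (R := k) m) ((ρ.linHom ρ') g u) = ρ' g ((LinearMap.applyₗ (R := k) m) u) := by
      intro g u
      show ρ' g (u (ρ g⁻¹ m)) = ρ' g (u m)
      rw [hm g⁻¹]
    refine Submodule.subset_span ?_
    exact ⟨Q, hQ, f₀ m, _, map_relTrace (ρ.linHom ρ') ρ' _ hα ⊤ Q f₀ hf₀⟩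
  intro f hf
  exact hle hf

/-- Post-composition with an equivariant map preserves the trace kernel. -/
lemma comp_traceKer_mem (ρ : Representation k G M) (ρ' : Representation k G M')
    (h : M →ₗ[k] M') (hh : ∀ (g : G) (m : M), h (ρ g m) = ρ' g (h m)) :
    ∀ u ∈ traceKer (ρ.linHom ρ) ⊤, h ∘ₗ u ∈ traceKer (ρ.linHom ρ') ⊤ := by
  let α : (M →ₗ[k] M) →ₗ[k] (M →ₗ[k] M') :=
    { toFun := fun u => h ∘ₗ u
      map_add' := fun u v => LinearMap.comp_add _ _ _
      map_smul' := fun c u => LinearMap.comp_smul _ _ _ }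
  have hle : traceKer (ρ.linHom ρ) ⊤ ≤ Submodule.comap α (traceKer (ρ.linHom ρ') ⊤) := by
    refine Submodule.span_le.mpr ?_
    rintro x ⟨Q, hQ, f₀, hf₀, rfl⟩
    have hα : ∀ (g : G) (u : M →ₗ[k] M),
        α ((ρ.linHom ρ) g u) = (ρ.linHom ρ') g (α u) := by
      intro g u
      refine LinearMap.ext fun m => ?_
      show h (ρ g (u (ρ g⁻¹ m))) = ρ' g (h (u (ρ g⁻¹ m)))
      rw [hh]
    refine Submodule.subset_span ?_
    exact ⟨Q, hQ, α f₀, _, map_relTrace (ρ.linHom ρ) (ρ.linHom ρ') α hα ⊤ Q f₀ hf₀⟩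
  intro u hu
  exact hle hu

/-- Pre-composition with an equivariant map preserves the trace kernel. -/
lemma traceKer_comp_mem (ρ : Representation k G M) (ρ' : Representation k G M')
    (h : M →ₗ[k] M') (hh : ∀ (g : G) (m : M), h (ρ g m) = ρ' g (h m)) :
    ∀ u ∈ traceKer (ρ'.linHom ρ') ⊤, u ∘ₗ h ∈ traceKer (ρ.linHom ρ') ⊤ := by
  let α : (M' →ₗ[k] M') →ₗ[k] (M →ₗ[k] M') :=
    { toFun := fun u => u ∘ₗ h
      map_add' := fun u v => LinearMap.add_comp _ _ _
      map_smul' := fun c u => LinearMap.smul_comp _ _ _ }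
  have hle : traceKer (ρ'.linHom ρ') ⊤ ≤ Submodule.comap α (traceKer (ρ.linHom ρ') ⊤) := by
    refine Submodule.span_le.mpr ?_
    rintro x ⟨Q, hQ, f₀, hf₀, rfl⟩
    have hα : ∀ (g : G) (u : M' →ₗ[k] M'),
        α ((ρ'.linHom ρ') g u) = (ρ.linHom ρ') g (α u) := by
      intro g u
      refine LinearMap.ext fun m => ?_
      show ρ' g (u (ρ' g⁻¹ (h m))) = ρ' g (u (h (ρ g⁻¹ m)))
      rw [hh]
    refine Submodule.subset_span ?_
    exact ⟨Q, hQ, α f₀, _, map_relTrace (ρ'.linHom ρ') (ρ.linHom ρ') α hα ⊤ Q f₀ hf₀⟩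
  intro u hu
  exact hle hu

lemma brauerKer_eq (ρ : Representation k G M) (p : ℕ) [CharP k p] :
    brauerKer ρ p ⊤ = Submodule.comap (fixedSub ρ (⊤ : Subgroup G)).subtype (traceKer ρ ⊤) := by
  unfold brauerKer
  rw [CharP.cast_eq_zero k p]
  rw [show Ideal.span {(0 : k)} = ⊥ from Submodule.span_singleton_eq_bot.mpr rfl]
  rw [Submodule.bot_smul, sup_bot_eq]

section PermBasis

variable {ι : Type*} [MulAction G ι]
variable (G)

/-- Coordinate restriction to the fixed-point basis indices. -/
noncomputable def theta (b : Module.Basis ι k M) : M →ₗ[k] (MulAction.fixedPoints G ι →₀ k) :=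
  (Finsupp.lsubtypeDomain (MulAction.fixedPoints G ι)) ∘ₗ (b.repr : M →ₗ[k] (ι →₀ k))

/-- Extension from fixed coordinates back to the module. -/
noncomputable def extE (b : Module.Basis ι k M) : (MulAction.fixedPoints G ι →₀ k) →ₗ[k] M :=
  Finsupp.linearCombination k (fun i => b (i : ι))

/-- The equivariant projection onto the span of the fixed basis vectors. -/
noncomputable def piFix (b : Module.Basis ι k M) : M →ₗ[k] M := extE G b ∘ₗ theta G b

variable (ρ : Representation k G M) {b : Module.Basis ι k M}
variable (hb : ∀ (g : G) (i : ι), ρ g (b i) = b (g • i))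

omit [Finite G]

lemma theta_apply (m : M) (j : MulAction.fixedPoints G ι) :
    theta G b m j = b.repr m (j : ι) := rfl

lemma extE_single (j : MulAction.fixedPoints G ι) (c : k) :
    extE G b (Finsupp.single j c) = c • b (j : ι) := by
  simp [extE]

lemma theta_extE (c : MulAction.fixedPoints G ι →₀ k) : theta G b (extE G b c) = c := by
  have : (theta G b) ∘ₗ (extE G b) = LinearMap.id := by
    refine Finsupp.lhom_ext fun j c => ?_
    ext j'
    classical
    simp only [LinearMap.comp_apply, LinearMap.id_apply, extE_single, theta_apply,
      map_smul, Finsupp.smul_apply, Module.Basis.repr_self]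
    rw [Finsupp.single_apply, Finsupp.single_apply]
    simp [Subtype.ext_iff, eq_comm]
  exact LinearMap.congr_fun this c

include hb

lemma rho_extE (g : G) (c : MulAction.fixedPoints G ι →₀ k) :
    ρ g (extE G b c) = extE G b c := by
  have : (ρ g) ∘ₗ (extE G b) = extE G b := by
    refine Finsupp.lhom_ext fun j c => ?_
    simp only [LinearMap.comp_apply, extE_single, map_smul, hb g, j.2 g]
  exact LinearMap.congr_fun this c

lemma repr_rho (g : G) (m : M) (j : ι) : b.repr (ρ g m) j = b.repr m (g⁻¹ • j) := by
  classical
  have : (Finsupp.lapply j) ∘ₗ (b.repr : M →ₗ[k] (ι →₀ k)) ∘ₗ (ρ g) =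
      (Finsupp.lapply (g⁻¹ • j)) ∘ₗ (b.repr : M →ₗ[k] (ι →₀ k)) := by
    refine b.ext fun i => ?_
    simp only [LinearMap.comp_apply, hb g i, LinearEquiv.coe_coe, Module.Basis.repr_self,
      Finsupp.lapply_apply]
    rw [Finsupp.single_apply, Finsupp.single_apply]
    refine if_congr ?_ rfl rfl
    constructor
    · rintro rfl; rw [inv_smul_smul]
    · rintro rfl; rw [smul_inv_smul]
  exact LinearMap.congr_fun this m

lemma theta_rho (g : G) (m : M) : theta G b (ρ g m) = theta G b m := by
  ext j
  rw [theta_apply, theta_apply, repr_rho G ρ hb, j.2 g⁻¹]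

lemma piFix_rho (g : G) (m : M) : piFix G b (ρ g m) = ρ g (piFix G b m) := by
  show extE G b (theta G b (ρ g m)) = ρ g (extE G b (theta G b m))
  rw [theta_rho G ρ hb, rho_extE G ρ hb]

omit hb in
lemma piFix_basis (i : ι) [Decidable (i ∈ MulAction.fixedPoints G ι)] :
    piFix G b (b i) = if i ∈ MulAction.fixedPoints G ι then b i else 0 := by
  classical
  by_cases h : i ∈ MulAction.fixedPoints G ι
  · rw [if_pos h]
    have ht : theta G b (b i) = Finsupp.single ⟨i, h⟩ 1 := by
      ext j
      rw [theta_apply]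
      simp only [Module.Basis.repr_self]
      rw [Finsupp.single_apply, Finsupp.single_apply]
      simp [Subtype.ext_iff]
    show extE G b (theta G b (b i)) = b i
    rw [ht, extE_single, one_smul]
  · rw [if_neg h]
    have ht : theta G b (b i) = 0 := by
      ext j
      rw [theta_apply]
      simp only [Module.Basis.repr_self]
      rw [Finsupp.single_apply, if_neg, Finsupp.coe_zero, Pi.zero_apply]
      rintro rfl
      exact h j.2
    show extE G b (theta G b (b i)) = 0
    rw [ht, map_zero]

end PermBasis

section PermTrace

variable {ι : Type*} [MulAction G ι]
variable (G)
variable (ρ : Representation k G M) {b : Module.Basis ι k M}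
variable (hb : ∀ (g : G) (i : ι), ρ g (b i) = b (g • i))

include hb

lemma theta_traceKer (p : ℕ) [Fact p.Prime] [CharP k p] (hP : IsPGroup p G) :
    ∀ m ∈ traceKer ρ ⊤, theta G b m = 0 := by
  have hle : traceKer ρ ⊤ ≤ LinearMap.ker (theta G b) := by
    refine Submodule.span_le.mpr ?_
    rintro x ⟨Q, hQ, m₀, hm₀, rfl⟩
    have hα : ∀ (g : G) (m : M), theta G b (ρ g m) =
        (1 : Representation k G (MulAction.fixedPoints G ι →₀ k)) g (theta G b m) := by
      intro g m
      rw [theta_rho G ρ hb]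
      rfl
    rw [SetLike.mem_coe, LinearMap.mem_ker,
      map_relTrace ρ _ (theta G b) hα ⊤ Q m₀ hm₀]
    exact relTrace_of_invariant _ hP hQ _ _ (fun g => rfl)
  exact fun m hm => hle hm

lemma id_sub_piFix_mem : LinearMap.id - piFix G b ∈ traceKer (ρ.linHom ρ) ⊤ := by
  classical
  letI : Finite (Subgroup G) :=
    Finite.of_injective (fun H : Subgroup G => (H : Set G)) SetLike.coe_injective
  letI : Fintype (Subgroup G) := Fintype.ofFinite _
  set r : ι → ι := fun i => (Quotient.mk (MulAction.orbitRel G ι) i).out with hr_def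
  have hr_orbit : ∀ i : ι, ∃ g : G, g • i = r i := by
    intro i
    have h1 : Quotient.mk (MulAction.orbitRel G ι) (r i) =
        Quotient.mk (MulAction.orbitRel G ι) i := Quotient.out_eq _
    have h2 : MulAction.orbitRel G ι (r i) i := Quotient.exact h1
    rw [MulAction.orbitRel_apply, MulAction.mem_orbit_iff] at h2
    exact h2
  have hr_smul : ∀ (g : G) (i : ι), r (g • i) = r i := by
    intro g i
    have hrel : MulAction.orbitRel G ι (g • i) i :=
      MulAction.orbitRel_apply.mpr (MulAction.mem_orbit i g)
    have : Quotient.mk (MulAction.orbitRel G ι) (g • i) =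
        Quotient.mk (MulAction.orbitRel G ι) i := Quotient.sound hrel
    simp only [hr_def, this]
  have hfix_iff : ∀ i : ι, MulAction.stabilizer G (r i) = ⊤ ↔
      i ∈ MulAction.fixedPoints G ι := by
    intro i
    obtain ⟨g₀, hg₀⟩ := hr_orbit i
    constructor
    · intro h
      have hri : ∀ g : G, g • r i = r i := fun g =>
        MulAction.mem_stabilizer_iff.mp (h ▸ Subgroup.mem_top g)
      have heq : i = r i := by
        calc i = g₀⁻¹ • (g₀ • i) := (inv_smul_smul g₀ i).symm
          _ = g₀⁻¹ • r i := by rw [hg₀]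
          _ = r i := hri g₀⁻¹
      intro g
      rw [heq, hri g]
    · intro h
      have hri : r i = i := by rw [← hg₀, h g₀]
      rw [hri]
      refine top_unique fun g _ => ?_
      exact MulAction.mem_stabilizer_iff.mpr (h g)
  set gS : Subgroup G → (M →ₗ[k] M) := fun S =>
    b.constr k (fun i => if r i = i ∧ MulAction.stabilizer G i = S then b i else 0)
    with hgS_def
  have hgS : ∀ S : Subgroup G, ∀ g ∈ S, (ρ.linHom ρ) g (gS S) = gS S := by
    intro S g hg
    refine b.ext fun i => ?_
    show ρ g (gS S (ρ g⁻¹ (b i))) = gS S (b i)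
    rw [hb g⁻¹ i, hgS_def]
    simp only [Module.Basis.constr_basis]
    by_cases hcase : g⁻¹ • i = i
    · rw [hcase]
      split_ifs with hcond
      · have hgi : g • i = i := by
          conv_lhs => rw [← hcase]
          rw [smul_inv_smul]
        rw [hb g i, hgi]
      · exact map_zero _
    · have c1 : ¬(r (g⁻¹ • i) = g⁻¹ • i ∧ MulAction.stabilizer G (g⁻¹ • i) = S) := by
        rintro ⟨-, h2⟩
        have hgmem : g • (g⁻¹ • i) = g⁻¹ • i := MulAction.mem_stabilizer_iff.mp (h2 ▸ hg)
        rw [smul_inv_smul] at hgmem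
        exact hcase hgmem.symm
      have c2 : ¬(r i = i ∧ MulAction.stabilizer G i = S) := by
        rintro ⟨-, h2⟩
        have hgmem : g • i = i := MulAction.mem_stabilizer_iff.mp (h2 ▸ hg)
        have : g⁻¹ • i = i := by
          conv_lhs => rw [← hgmem]
          rw [inv_smul_smul]
        exact hcase this
      rw [if_neg c1, if_neg c2, map_zero]
  have key : ∀ (S : Subgroup G) (i : ι),
      relTrace (ρ.linHom ρ) ⊤ S (gS S) (hgS S) (b i) =
        if MulAction.stabilizer G (r i) = S then b i else 0 := by
    intro S i
    letI : Fintype ((⊤ : Subgroup G) ⧸ S.subgroupOf ⊤) := Fintype.ofFinite _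
    have heval : ∀ g : ↥(⊤ : Subgroup G), ((ρ.linHom ρ) (g : G) (gS S)) (b i) =
        if ((g : G)⁻¹ • i = r i ∧ MulAction.stabilizer G (r i) = S) then b i else 0 := by
      intro g
      show ρ (g : G) (gS S (ρ (g : G)⁻¹ (b i))) = _
      rw [hb ((g : G)⁻¹) i, hgS_def]
      simp only [Module.Basis.constr_basis]
      rw [apply_ite (ρ (g : G)), map_zero, hb (g : G) ((g : G)⁻¹ • i), smul_inv_smul]
      refine if_congr ?_ rfl rfl
      constructor
      · rintro ⟨h1, h2⟩
        rw [hr_smul] at h1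
        refine ⟨h1.symm, ?_⟩
        rw [h1]
        exact h2
      · rintro ⟨h1, h2⟩
        refine ⟨by rw [hr_smul, h1], ?_⟩
        rw [h1, h2]
    unfold relTrace
    rw [finsum_eq_sum_of_fintype, LinearMap.sum_apply]
    by_cases hS : MulAction.stabilizer G (r i) = S
    · rw [if_pos hS]
      obtain ⟨g₀, hg₀⟩ := hr_orbit i
      refine Eq.trans (Finset.sum_eq_single
        (Quotient.mk'' ⟨g₀⁻¹, Subgroup.mem_top g₀⁻¹⟩) ?_ ?_) ?_
      · intro x _ hne
        induction x using Quotient.inductionOn' with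
        | h g =>
          rw [Quotient.liftOn'_mk'', heval]
          rw [if_neg]
          rintro ⟨h1, -⟩
          refine hne ?_
          refine Quotient.sound' ?_
          rw [QuotientGroup.leftRel_apply]
          refine Subgroup.mem_subgroupOf.mpr ?_
          show ((g : G)⁻¹ * g₀⁻¹) ∈ S
          rw [← hS]
          refine MulAction.mem_stabilizer_iff.mpr ?_
          rw [mul_smul]
          have hstep : g₀⁻¹ • r i = i := by rw [← hg₀, inv_smul_smul]
          rw [hstep, h1]
      · intro hx
        exact absurd (Finset.mem_univ _) hx
      · rw [Quotient.liftOn'_mk'', heval]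
        rw [if_pos]
        refine ⟨?_, hS⟩
        show ((g₀⁻¹ : G))⁻¹ • i = r i
        rw [inv_inv]
        exact hg₀
    · rw [if_neg hS]
      refine Finset.sum_eq_zero fun x _ => ?_
      induction x using Quotient.inductionOn' with
      | h g =>
        rw [Quotient.liftOn'_mk'', heval]
        rw [if_neg]
        rintro ⟨-, h2⟩
        exact hS h2
  have hdecomp : LinearMap.id - piFix G b =
      ∑ S ∈ Finset.univ.filter (fun S : Subgroup G => S ≠ ⊤),
        relTrace (ρ.linHom ρ) ⊤ S (gS S) (hgS S) := by
    refine b.ext fun i => ?_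
    rw [LinearMap.sub_apply, LinearMap.id_apply, piFix_basis, LinearMap.sum_apply]
    rw [Finset.sum_congr rfl (fun S _ => key S i), Finset.sum_ite_eq]
    by_cases h : i ∈ MulAction.fixedPoints G ι
    · rw [if_pos h, if_neg, sub_self]
      rw [Finset.mem_filter]
      rintro ⟨-, hne⟩
      exact hne ((hfix_iff i).mpr h)
    · rw [if_neg h, sub_zero, if_pos]
      rw [Finset.mem_filter]
      exact ⟨Finset.mem_univ _, fun htop => h ((hfix_iff i).mp htop)⟩
  rw [hdecomp]
  refine Submodule.sum_mem _ fun S hS => Submodule.subset_span ?_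
  exact ⟨S, lt_top_iff_ne_top.mpr (Finset.mem_filter.mp hS).2, gS S, hgS S, rfl⟩

end PermTrace

section Quot

variable (p : ℕ) [Fact p.Prime] [CharP k p]

lemma brauerMap_mk (ρ : Representation k G M) (ρ' : Representation k G M')
    (f : M →ₗ[k] M') (hf : ∀ (g : G) (m : M), f (ρ g m) = ρ' g (f m))
    (x : fixedSub ρ (⊤ : Subgroup G)) :
    brauerMap ρ ρ' f hf p ⊤ (Submodule.Quotient.mk x) =
      Submodule.Quotient.mk ⟨f x.1, fun g hg => by rw [← hf g x.1, x.2 g hg]⟩ := by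
  rfl

/-- The Brauer quotient of a permutation module is the span of the fixed basis vectors. -/
lemma bq_equiv (hP : IsPGroup p G) (ρ : Representation k G M)
    {ι : Type*} [MulAction G ι] {b : Module.Basis ι k M}
    (hb : ∀ (g : G) (i : ι), ρ g (b i) = b (g • i)) :
    ∃ E : BrauerQuot ρ p (⊤ : Subgroup G) ≃ₗ[k] (MulAction.fixedPoints G ι →₀ k),
      ∀ x : fixedSub ρ (⊤ : Subgroup G),
        E (Submodule.Quotient.mk x) = theta G b x.1 := by
  have hker : brauerKer ρ p ⊤ ≤
      LinearMap.ker ((theta G b) ∘ₗ (fixedSub ρ (⊤ : Subgroup G)).subtype) := by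
    rw [brauerKer_eq]
    intro x hx
    rw [LinearMap.mem_ker, LinearMap.comp_apply]
    exact theta_traceKer G ρ hb p hP _ (Submodule.mem_comap.mp hx)
  set fwd : BrauerQuot ρ p (⊤ : Subgroup G) →ₗ[k] (MulAction.fixedPoints G ι →₀ k) :=
    Submodule.liftQ _ _ hker with hfwd
  have hmem : ∀ c, extE G b c ∈ fixedSub ρ (⊤ : Subgroup G) :=
    fun c g _ => rho_extE G ρ hb g c
  set inv : (MulAction.fixedPoints G ι →₀ k) →ₗ[k] BrauerQuot ρ p (⊤ : Subgroup G) :=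
    (brauerKer ρ p ⊤).mkQ ∘ₗ
      LinearMap.codRestrict (fixedSub ρ (⊤ : Subgroup G)) (extE G b) hmem with hinv
  have h1 : fwd ∘ₗ inv = LinearMap.id := by
    refine LinearMap.ext fun c => ?_
    rw [LinearMap.comp_apply, hinv, LinearMap.comp_apply, Submodule.mkQ_apply, hfwd,
      Submodule.liftQ_apply, LinearMap.comp_apply]
    exact theta_extE G c
  have h2 : inv ∘ₗ fwd = LinearMap.id := by
    refine Submodule.linearMap_qext _ ?_
    refine LinearMap.ext fun x => ?_
    simp only [LinearMap.comp_apply, Submodule.mkQ_apply, hfwd, Submodule.liftQ_apply,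
      hinv, LinearMap.id_apply]
    rw [Submodule.Quotient.eq, brauerKer_eq, Submodule.mem_comap]
    have hval : ((fixedSub ρ (⊤ : Subgroup G)).subtype)
        ((LinearMap.codRestrict (fixedSub ρ (⊤ : Subgroup G)) (extE G b) hmem)
          (theta G b ((fixedSub ρ (⊤ : Subgroup G)).subtype x)) - x) =
        -(((LinearMap.id : M →ₗ[k] M) - piFix G b) x.1) := by
      simp only [map_sub, Submodule.subtype_apply, LinearMap.codRestrict_apply,
        LinearMap.sub_apply, LinearMap.id_apply, neg_sub]
      rfl
    rw [hval]
    refine neg_mem ?_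
    exact traceKer_apply_mem ρ ρ (fun g => x.2 g trivial) _ (id_sub_piFix_mem G ρ hb)
  refine ⟨LinearEquiv.ofLinear fwd inv h1 h2, fun x => ?_⟩
  rw [LinearEquiv.ofLinear_apply, hfwd, Submodule.liftQ_apply, LinearMap.comp_apply]
  rfl

end Quot

section Main

variable (p : ℕ) [Fact p.Prime] [CharP k p]

set_option maxHeartbeats 2000000 in
lemma brauer_hom_general (hP : IsPGroup p G)
    (ρ : Representation k G M) (ρ' : Representation k G M')
    (hM : IsPermRep ρ) (hM' : IsPermRep ρ') :
    ∃ e : BrauerQuot (ρ.linHom ρ') p (⊤ : Subgroup G) ≃ₗ[k]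
        (BrauerQuot ρ p (⊤ : Subgroup G) →ₗ[k] BrauerQuot ρ' p (⊤ : Subgroup G)),
      ∀ (f : M →ₗ[k] M') (hf : ∀ (g : G) (m : M), f (ρ g m) = ρ' g (f m))
        (hfix : f ∈ fixedSub (ρ.linHom ρ') (⊤ : Subgroup G)),
        e (Submodule.Quotient.mk ⟨f, hfix⟩) = brauerMap ρ ρ' f hf p ⊤ := by
  classical
  obtain ⟨ι, b, hbex⟩ := hM
  choose a ha using hbex
  have ha1 : ∀ i, a 1 i = i := fun i =>
    b.injective (by rw [← ha 1 i, map_one, Module.End.one_apply])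
  have hamul : ∀ g h i, a (g * h) i = a g (a h i) := fun g h i =>
    b.injective (by
      rw [← ha g (a h i), ← ha h i, ← ha (g * h) i, map_mul, Module.End.mul_apply])
  letI : SMul G ι := ⟨a⟩
  letI : MulAction G ι := { one_smul := ha1, mul_smul := hamul }
  have hb : ∀ (g : G) (i : ι), ρ g (b i) = b (g • i) := ha
  obtain ⟨ι', b', hbex'⟩ := hM'
  choose a' ha' using hbex'
  have ha1' : ∀ i, a' 1 i = i := fun i =>
    b'.injective (by rw [← ha' 1 i, map_one, Module.End.one_apply])
  have hamul' : ∀ g h i, a' (g * h) i = a' g (a' h i) := fun g h i =>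
    b'.injective (by
      rw [← ha' g (a' h i), ← ha' h i, ← ha' (g * h) i, map_mul, Module.End.mul_apply])
  letI : SMul G ι' := ⟨a'⟩
  letI : MulAction G ι' := { one_smul := ha1', mul_smul := hamul' }
  have hb' : ∀ (g : G) (i : ι'), ρ' g (b' i) = b' (g • i) := ha'
  obtain ⟨EM, hEM⟩ := bq_equiv p hP ρ hb
  obtain ⟨EM', hEM'⟩ := bq_equiv p hP ρ' hb'
  set L : ↥(fixedSub (ρ.linHom ρ') (⊤ : Subgroup G)) →ₗ[k]
      (BrauerQuot ρ p (⊤ : Subgroup G) →ₗ[k] BrauerQuot ρ' p (⊤ : Subgroup G)) :=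
    { toFun := fun F => brauerMap ρ ρ' F.1 (equivariant_of_fixed F.2) p ⊤
      map_add' := by
        intro F F'
        refine LinearMap.ext fun z => ?_
        obtain ⟨x, rfl⟩ := Submodule.Quotient.mk_surjective _ z
        rw [LinearMap.add_apply, brauerMap_mk, brauerMap_mk, brauerMap_mk,
          ← Submodule.Quotient.mk_add]
        rfl
      map_smul' := by
        intro c F
        refine LinearMap.ext fun z => ?_
        obtain ⟨x, rfl⟩ := Submodule.Quotient.mk_surjective _ z
        rw [RingHom.id_apply, LinearMap.smul_apply, brauerMap_mk, brauerMap_mk,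
          ← Submodule.Quotient.mk_smul]
        rfl } with hL
  have hL0 : brauerKer (ρ.linHom ρ') p ⊤ ≤ LinearMap.ker L := by
    intro F hF
    rw [brauerKer_eq, Submodule.mem_comap] at hF
    rw [LinearMap.mem_ker]
    have hLF : L F = brauerMap ρ ρ' F.1 (equivariant_of_fixed F.2) p ⊤ := rfl
    rw [hLF]
    refine LinearMap.ext fun z => ?_
    obtain ⟨x, rfl⟩ := Submodule.Quotient.mk_surjective _ z
    rw [brauerMap_mk, LinearMap.zero_apply, Submodule.Quotient.mk_eq_zero,
      brauerKer_eq, Submodule.mem_comap]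
    exact traceKer_apply_mem ρ ρ' (fun g => x.2 g trivial) F.1 hF
  set Φ := Submodule.liftQ _ L hL0 with hΦ
  have hΦmk : ∀ F : ↥(fixedSub (ρ.linHom ρ') (⊤ : Subgroup G)),
      Φ (Submodule.Quotient.mk F) =
        brauerMap ρ ρ' F.1 (equivariant_of_fixed F.2) p ⊤ := by
    intro F
    rw [hΦ, Submodule.liftQ_apply]
    rfl
  have hinj : Function.Injective Φ := by
    rw [← LinearMap.ker_eq_bot]
    refine (Submodule.eq_bot_iff _).mpr fun z hz => ?_
    obtain ⟨⟨f, hfix⟩, rfl⟩ := Submodule.Quotient.mk_surjective _ z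
    rw [LinearMap.mem_ker, hΦmk] at hz
    rw [Submodule.Quotient.mk_eq_zero, brauerKer_eq, Submodule.mem_comap]
    show f ∈ traceKer (ρ.linHom ρ') ⊤
    have hfeq : ∀ (g : G) (m : M), f (ρ g m) = ρ' g (f m) := equivariant_of_fixed hfix
    have hval : ∀ x : fixedSub ρ (⊤ : Subgroup G), f x.1 ∈ traceKer ρ' ⊤ := by
      intro x
      have h1 := LinearMap.congr_fun hz (Submodule.Quotient.mk x)
      rw [brauerMap_mk, LinearMap.zero_apply, Submodule.Quotient.mk_eq_zero,
        brauerKer_eq, Submodule.mem_comap] at h1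
      exact h1
    have hπcomp : piFix G b' ∘ₗ (f ∘ₗ piFix G b) = 0 := by
      refine b.ext fun i => ?_
      rw [LinearMap.comp_apply, LinearMap.comp_apply, LinearMap.zero_apply, piFix_basis]
      by_cases h : i ∈ MulAction.fixedPoints G ι
      · rw [if_pos h]
        have hbmem : b i ∈ fixedSub ρ (⊤ : Subgroup G) := fun g _ => by rw [hb g i, h g]
        have h2 := hval ⟨b i, hbmem⟩
        have h3 : theta G b' (f (b i)) = 0 := theta_traceKer G ρ' hb' p hP _ h2
        show extE G b' (theta G b' (f (b i))) = 0
        rw [h3, map_zero]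
      · rw [if_neg h, map_zero, map_zero]
    have hdec : f = f ∘ₗ ((LinearMap.id : M →ₗ[k] M) - piFix G b) +
        ((LinearMap.id : M' →ₗ[k] M') - piFix G b') ∘ₗ (f ∘ₗ piFix G b) := by
      refine LinearMap.ext fun m => ?_
      have h0 := LinearMap.congr_fun hπcomp m
      simp only [LinearMap.comp_apply, LinearMap.zero_apply] at h0
      simp only [LinearMap.add_apply, LinearMap.comp_apply, LinearMap.sub_apply,
        LinearMap.id_apply, map_sub, h0, sub_zero]
      abel
    rw [hdec]
    refine Submodule.add_mem _ ?_ ?_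
    · exact comp_traceKer_mem ρ ρ' f hfeq _ (id_sub_piFix_mem G ρ hb)
    · refine traceKer_comp_mem ρ ρ' (f ∘ₗ piFix G b) ?_ _ (id_sub_piFix_mem G ρ' hb')
      intro g m
      rw [LinearMap.comp_apply, LinearMap.comp_apply, piFix_rho G ρ hb, hfeq]
  have hsurj : Function.Surjective Φ := by
    intro φ
    obtain ⟨f, hf_def⟩ : ∃ f : M →ₗ[k] M', f = extE G b' ∘ₗ (EM'.toLinearMap ∘ₗ
      (φ ∘ₗ (EM.symm.toLinearMap ∘ₗ theta G b))) := ⟨_, rfl⟩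
    have hfeq : ∀ (g : G) (m : M), f (ρ g m) = ρ' g (f m) := by
      intro g m
      rw [hf_def]
      simp only [LinearMap.comp_apply, LinearEquiv.coe_coe]
      rw [theta_rho G ρ hb, rho_extE G ρ' hb']
    have hfix : f ∈ fixedSub (ρ.linHom ρ') (⊤ : Subgroup G) := by
      intro g _
      refine LinearMap.ext fun m => ?_
      show ρ' g (f (ρ g⁻¹ m)) = f m
      rw [hfeq g⁻¹ m, ← Module.End.mul_apply, ← map_mul, mul_inv_cancel, map_one,
        Module.End.one_apply]
    refine ⟨Submodule.Quotient.mk ⟨f, hfix⟩, ?_⟩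
    rw [hΦmk]
    refine LinearMap.ext fun z => ?_
    obtain ⟨x, rfl⟩ := Submodule.Quotient.mk_surjective _ z
    rw [brauerMap_mk]
    refine EM'.injective ?_
    rw [hEM']
    show theta G b' (f x.1) = EM' (φ (Submodule.Quotient.mk x))
    have hstep : theta G b' (f x.1) = EM' (φ (EM.symm (theta G b x.1))) := by
      rw [hf_def]
      simp only [LinearMap.comp_apply, LinearEquiv.coe_coe]
      rw [theta_extE]
    rw [hstep, ← hEM x, LinearEquiv.symm_apply_apply]
  refine ⟨LinearEquiv.ofBijective Φ ⟨hinj, hsurj⟩, ?_⟩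
  intro f hf hfix
  exact hΦmk ⟨f, hfix⟩

end Main

end BrauerAux



open PaperGrp in
/-- **Broué.** Let `k` be a field of characteristic `p`, `P` a finite
`p`-group, and `M`, `M'` permutation `kP`-modules.  Then the Brauer construction at `P`
of `Hom_k(M, M')` (with the conjugation action) is naturally isomorphic to
`Hom_k(M(P), M'(P))`; the isomorphism sends the class of a `kP`-linear map `f` to the
induced map `f(P)`.  In particular `(End_k(M))(P) ≅ End_k(M(P))` as `k`-algebras, the
isomorphism being multiplicative. -/
theorem brauer_hom_iso
    (k : Type*) [Field k] (p : ℕ) [Fact p.Prime] [CharP k p]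
    (P : Type*) [Group P] [Finite P] (hP : IsPGroup p P)
    (M : Type*) [AddCommGroup M] [Module k M] (ρM : Representation k P M)
    (hM : IsPermRep ρM)
    (M' : Type*) [AddCommGroup M'] [Module k M'] (ρM' : Representation k P M')
    (hM' : IsPermRep ρM') :
    (∃ e : BrauerQuot (ρM.linHom ρM') p (⊤ : Subgroup P) ≃ₗ[k]
        (BrauerQuot ρM p (⊤ : Subgroup P) →ₗ[k] BrauerQuot ρM' p (⊤ : Subgroup P)),
      ∀ (f : M →ₗ[k] M') (hf : ∀ (g : P) (m : M), f (ρM g m) = ρM' g (f m))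
        (hfix : f ∈ fixedSub (ρM.linHom ρM') (⊤ : Subgroup P)),
        e (Submodule.Quotient.mk ⟨f, hfix⟩) = brauerMap ρM ρM' f hf p ⊤) ∧
    (∃ eE : BrauerQuot (ρM.linHom ρM) p (⊤ : Subgroup P) ≃ₗ[k]
        (BrauerQuot ρM p (⊤ : Subgroup P) →ₗ[k] BrauerQuot ρM p (⊤ : Subgroup P)),
      (∀ (f : M →ₗ[k] M) (hf : ∀ (g : P) (m : M), f (ρM g m) = ρM g (f m))
        (hfix : f ∈ fixedSub (ρM.linHom ρM) (⊤ : Subgroup P)),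
        eE (Submodule.Quotient.mk ⟨f, hfix⟩) = brauerMap ρM ρM f hf p ⊤) ∧
      (∀ (f f' : M →ₗ[k] M)
        (hfix : f ∈ fixedSub (ρM.linHom ρM) (⊤ : Subgroup P))
        (hfix' : f' ∈ fixedSub (ρM.linHom ρM) (⊤ : Subgroup P))
        (hfix'' : f ∘ₗ f' ∈ fixedSub (ρM.linHom ρM) (⊤ : Subgroup P)),
        eE (Submodule.Quotient.mk ⟨f ∘ₗ f', hfix''⟩) =
          eE (Submodule.Quotient.mk ⟨f, hfix⟩) ∘ₗ eE (Submodule.Quotient.mk ⟨f', hfix'⟩))) := by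
  obtain ⟨e, he⟩ := BrauerAux.brauer_hom_general (G := P) p hP ρM ρM' hM hM'
  obtain ⟨eE, heE⟩ := BrauerAux.brauer_hom_general (G := P) p hP ρM ρM hM hM
  refine ⟨⟨e, he⟩, ⟨eE, heE, ?_⟩⟩
  intro f f' hfix hfix' hfix''
  have hf : ∀ (g : P) (m : M), f (ρM g m) = ρM g (f m) := BrauerAux.equivariant_of_fixed hfix
  have hf' : ∀ (g : P) (m : M), f' (ρM g m) = ρM g (f' m) := BrauerAux.equivariant_of_fixed hfix'
  have hf'' : ∀ (g : P) (m : M), (f ∘ₗ f') (ρM g m) = ρM g ((f ∘ₗ f') m) :=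
    BrauerAux.equivariant_of_fixed hfix''
  rw [heE (f ∘ₗ f') hf'' hfix'', heE f hf hfix, heE f' hf' hfix']
  refine LinearMap.ext fun z => ?_
  obtain ⟨x, rfl⟩ := Submodule.Quotient.mk_surjective _ z
  rw [LinearMap.comp_apply, BrauerAux.brauerMap_mk, BrauerAux.brauerMap_mk,
    BrauerAux.brauerMap_mk]
  rfl
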